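/- arXiv:2212.12477 — 2 statements merged into one kernel-verified Lean document; each statement's English description precedes it below -/
import Mathlib

section
/- If λ is a t-core partition of length at most tn+1, then the Frobenius rank of λ equals max(n_0(λ) - n - 1, 0) plus the sum over i from 1 to t-1 of max(n_i(λ) - n, 0), where n_i(λ) is the number of parts of β(λ, tn+1) congruent to i mod t. -/
/-! The Frobenius rank of `λ` counts the beta-numbers of `β(λ, m)` that are at least `m`.
For a `t`-core the beta-set is `{t * j + i | i < t, j < n_i(λ)}`, so with `m = tn + 1` runner `0`
contributes its beads with `j ≥ n + 1` and every other runner those with `j ≥ n`. -/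

open Finset

/-- `l` is a partition of length at most `m`: antitone with all parts beyond `m` zero. -/
def PartLen (l : ℕ → ℕ) (m : ℕ) : Prop := Antitone l ∧ ∀ i, m ≤ i → l i = 0

/-- The beta-set `β(λ, m)` with parts `λ_i + m - i` (1-indexed), as a finset. -/
def betaSet (l : ℕ → ℕ) (m : ℕ) : Finset ℕ := (Finset.range m).image (fun i => l i + (m - 1 - i))

/-- `n_i(λ)`: number of parts of the beta-set `β(λ, m)` congruent to `i` modulo `t`. -/
def nP (l : ℕ → ℕ) (m t : ℕ) (i : ℤ) : ℕ :=
  ((Finset.range m).filter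
    (fun j => ((l j + (m - 1 - j) : ℕ) : ℤ) % (t : ℤ) = i % (t : ℤ))).card

/-- Macdonald's beta-set of the `t`-core of `λ`: the numbers `t*j + i` for `j < n_i(λ)`. -/
def coreBetaSet (l : ℕ → ℕ) (m t : ℕ) : Finset ℕ :=
  (Finset.range t).biUnion (fun i => (Finset.range (nP l m t i)).image (fun j => t * j + i))

/-- `λ` is a `t`-core iff its beta-set is already the beta-set of its `t`-core. -/
def IsTCore (l : ℕ → ℕ) (m t : ℕ) : Prop := betaSet l m = coreBetaSet l m t

/-- The `t`-core of `λ` (with `m` beta-numbers), via Macdonald's construction. -/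
def tCore (l : ℕ → ℕ) (m t : ℕ) : ℕ → ℕ := fun i =>
  if i < m then ((coreBetaSet l m t).sort (· ≤ ·)).getD (m - 1 - i) 0 - (m - 1 - i) else 0

/-- Part `j+1` of the conjugate partition of `l` (length at most `m`). -/
def conj (l : ℕ → ℕ) (m j : ℕ) : ℕ := ((Finset.range m).filter (fun i => j + 1 ≤ l i)).card

/-- The Frobenius rank: the number of `i` with `λ_i ≥ i` (1-indexed). -/
def frobRank (l : ℕ → ℕ) (m : ℕ) : ℕ := ((Finset.range m).filter (fun i => i + 1 ≤ l i)).card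

/-- First Frobenius coordinate `α_{j+1} = λ_{j+1} - (j+1)`. -/
def fA (l : ℕ → ℕ) (j : ℕ) : ℤ := (l j : ℤ) - (j + 1)

/-- Second Frobenius coordinate `β_{j+1} = λ'_{j+1} - (j+1)`. -/
def fB (l : ℕ → ℕ) (m j : ℕ) : ℤ := (conj l m j : ℤ) - (j + 1)

/-- `λ` is `(z₁, z₂, k)`-asymmetric: in Frobenius coordinates,
`λ = (α_1,…,α_r | α_1+z₁, …, (α_k+z₁ omitted), …, α_r+z₁, z₂)`; for `k = 0` no part is
omitted and no part (`z₂`) is added. -/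
def IsAsym (l : ℕ → ℕ) (m : ℕ) (z1 z2 : ℤ) (k : ℕ) : Prop :=
  k ≤ frobRank l m ∧
  (if k = 0 then ∀ j < frobRank l m, fB l m j = fA l j + z1
   else (∀ j : ℕ, j + 1 < k → fB l m j = fA l j + z1) ∧
        (∀ j : ℕ, k ≤ j + 1 → j + 2 ≤ frobRank l m → fB l m j = fA l (j + 1) + z1) ∧
        1 ≤ frobRank l m ∧ fB l m (frobRank l m - 1) = z2)

theorem betaNumber_injOn {l : ℕ → ℕ} (hl : Antitone l) (m : ℕ) :
    Set.InjOn (fun i => l i + (m - 1 - i)) (range m : Set ℕ) := by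
  intro a ha b hb hab
  simp only [coe_range, Set.mem_Iio] at ha hb hab
  rcases lt_trichotomy a b with h | h | h
  · have := hl h.le; omega
  · exact h
  · have := hl h.le; omega

/-- Row `i` reaches the diagonal (`i + 1 ≤ λ_{i+1}`) exactly when its beta-number is `≥ m`. -/
theorem frobRank_eq_card_betaSet_filter_ge {l : ℕ → ℕ} (hl : Antitone l) (m : ℕ) :
    frobRank l m = #{x ∈ betaSet l m | m ≤ x} := by
  rw [betaSet, filter_image,
    card_image_of_injOn ((betaNumber_injOn hl m).mono (coe_subset.mpr (filter_subset _ _)))]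
  refine congrArg card (filter_congr fun i hi => ?_)
  rw [mem_range] at hi
  omega

theorem card_filter_range_of_iff {p : ℕ → Prop} [DecidablePred p] {c : ℕ}
    (hp : ∀ j, p j ↔ c ≤ j) (N : ℕ) : #{j ∈ range N | p j} = N - c := by
  rw [filter_congr fun j _ => hp j, range_eq_Ico, Ico_filter_le, Nat.card_Ico, zero_max]

theorem card_coreBetaSet_filter_ge (l : ℕ → ℕ) (m t M : ℕ) :
    #{x ∈ coreBetaSet l m t | M ≤ x} =
      ∑ i ∈ range t, #{j ∈ range (nP l m t i) | M ≤ t * j + i} := by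
  have hmod : ∀ i ∈ range t, ∀ j, (t * j + i) % t = i := fun i hi j => by
    rw [Nat.mul_add_mod, Nat.mod_eq_of_lt (mem_range.mp hi)]
  rw [coreBetaSet, filter_biUnion, card_biUnion]
  · refine sum_congr rfl fun i hi => ?_
    have ht : 0 < t := Nat.zero_lt_of_lt (mem_range.mp hi)
    rw [filter_image, card_image_of_injective _
      fun a b h => Nat.eq_of_mul_eq_mul_left ht (Nat.add_right_cancel h)]
  · intro i hi i' hi' hne
    refine disjoint_left.mpr fun x hx hx' => hne ?_
    simp only [mem_filter, mem_image] at hx hx'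
    obtain ⟨⟨j, -, rfl⟩, -⟩ := hx
    obtain ⟨⟨j', -, hj'⟩, -⟩ := hx'
    rw [← hmod i hi j, ← hj', hmod i' hi' j']

theorem mul_add_one_le_mul_iff {t n j : ℕ} (ht : 0 < t) : t * n + 1 ≤ t * j ↔ n + 1 ≤ j := by
  rw [Nat.add_one_le_iff, Nat.add_one_le_iff, Nat.mul_lt_mul_left ht]

theorem mul_add_one_le_mul_add_iff {t n i j : ℕ} (hi : 0 < i) (hit : i < t) :
    t * n + 1 ≤ t * j + i ↔ n ≤ j := by
  constructor
  · intro h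
    by_contra! hj
    have := Nat.mul_le_mul_left t (Nat.add_one_le_iff.mpr hj)
    rw [Nat.mul_add_one] at this
    omega
  · intro h
    have := Nat.mul_le_mul_left t h
    omega

theorem frobRank_tcore_tn_add_one_general (t n : ℕ) (ht : 2 ≤ t) (l : ℕ → ℕ)
    (hl : PartLen l (t * n + 1)) (hcore : IsTCore l (t * n + 1) t) :
    frobRank l (t * n + 1) =
      (nP l (t * n + 1) t 0 - (n + 1)) +
        ∑ i ∈ Finset.Icc 1 (t - 1), (nP l (t * n + 1) t (i : ℕ) - n) := by
  have hsplit : range t = insert 0 (Icc 1 (t - 1)) := by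
    ext i
    simp only [mem_range, mem_insert, mem_Icc]
    omega
  rw [frobRank_eq_card_betaSet_filter_ge hl.1, hcore, card_coreBetaSet_filter_ge, hsplit,
    sum_insert (by simp)]
  congr 1
  · simpa using card_filter_range_of_iff (fun j => mul_add_one_le_mul_iff (by omega)) _
  · refine sum_congr rfl fun i hi => ?_
    rw [mem_Icc] at hi
    exact card_filter_range_of_iff (fun j => mul_add_one_le_mul_add_iff (by omega) (by omega)) _

/-- rank of a `t`-core of length at most `tn+1`. -/
theorem frobRank_tcore_tn_add_one (t n : ℕ) (ht : 2 ≤ t) (hn : 1 ≤ n) (l : ℕ → ℕ)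
    (hl : PartLen l (t * n + 1)) (hcore : IsTCore l (t * n + 1) t) :
    frobRank l (t * n + 1) =
      (nP l (t * n + 1) t 0 - (n + 1)) +
        ∑ i ∈ Finset.Icc 1 (t - 1), (nP l (t * n + 1) t (i : ℕ) - n) :=
  frobRank_tcore_tn_add_one_general t n ht l hl hcore
end

section
/- For integers a ≥ b ≥ c ≥ 0 with a and b odd and c even: s_{(a,b,c)}(x, -x, y) = - s_{((b-1)/2, c/2)}(x², y²) · s_{((a+1)/2)}(x²). -/
/-- Schur polynomial in 3 variables via the bialternant formula
`det(v_i^{μ_j + 3 - j}) / det(v_i^{3 - j})` (1-indexed `j`). -/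
noncomputable def schur3 {F : Type*} [Field F] (μ : Fin 3 → ℕ) (v : Fin 3 → F) : F :=
  Matrix.det (Matrix.of fun i j : Fin 3 => v i ^ (μ j + (2 - (j : ℕ)))) /
    Matrix.det (Matrix.of fun i j : Fin 3 => v i ^ (2 - (j : ℕ)))

/-- Schur polynomial in 2 variables via the bialternant formula. -/
noncomputable def schur2 {F : Type*} [Field F] (μ : Fin 2 → ℕ) (v : Fin 2 → F) : F :=
  Matrix.det (Matrix.of fun i j : Fin 2 => v i ^ (μ j + (1 - (j : ℕ)))) /
    Matrix.det (Matrix.of fun i j : Fin 2 => v i ^ (1 - (j : ℕ)))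

/-!
Under `(x, -x, y)` the exponents `a + 2`, `b + 1`, `c` of the numerator alternant are odd, even,
even, so adding its first two rows leaves `(0, 2x^(b+1), 2x^c)`: the numerator is
`2x · x^(a+1) · (x^(b+1) y^c - x^c y^(b+1))`, while the Vandermonde denominator is
`-2x (x² - y²)`. Cancelling `2x`, what remains is `-x^(a+1)` times the two-variable bialternant
of `((b-1)/2, c/2)` at `(x², y²)`. When `x = 0` both sides vanish, the left one by division by zero.
-/

section

variable {F : Type*} [Field F]

theorem schur2_eq (ν : Fin 2 → ℕ) (s t : F) :
    schur2 ν ![s, t] = (s ^ (ν 0 + 1) * t ^ ν 1 - s ^ ν 1 * t ^ (ν 0 + 1)) / (s - t) := by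
  simp [schur2, Matrix.det_fin_two]

theorem schur3_self_neg_of_odd_odd_even (x y : F) (h2 : (2 : F) ≠ 0) {a b c : ℕ}
    (ha : Odd a) (hb : Odd b) (hc : Even c) :
    schur3 ![a, b, c] ![x, -x, y] =
      -(x ^ (a + 1) * (x ^ (b + 1) * y ^ c - x ^ c * y ^ (b + 1)) / (x ^ 2 - y ^ 2)) := by
  have hnum : (Matrix.of fun i j : Fin 3 => ![x, -x, y] i ^ (![a, b, c] j + (2 - (j : ℕ)))).det =
      2 * x * (x ^ (a + 1) * (x ^ (b + 1) * y ^ c - x ^ c * y ^ (b + 1))) := by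
    have hxa : (-x) ^ (a + 2) = -x ^ (a + 2) := (ha.add_even even_two).neg_pow x
    have hxb : (-x) ^ (b + 1) = x ^ (b + 1) := (hb.add_odd odd_one).neg_pow x
    have hxc : (-x) ^ c = x ^ c := hc.neg_pow x
    simp only [Matrix.det_fin_three, Matrix.of_apply, Matrix.cons_val, Fin.isValue,
      Fin.coe_ofNat_eq_mod, Nat.mod_succ, Nat.zero_mod, Nat.one_mod, tsub_zero, tsub_self,
      Nat.add_one_sub_one, add_zero, hxa, hxb, hxc]
    ring
  have hden : (Matrix.of fun i j : Fin 3 => ![x, -x, y] i ^ (2 - (j : ℕ))).det =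
      2 * x * -(x ^ 2 - y ^ 2) := by
    simp only [Matrix.det_fin_three, Matrix.of_apply, Matrix.cons_val, Fin.isValue,
      Fin.coe_ofNat_eq_mod, Nat.mod_succ, Nat.zero_mod, Nat.one_mod, tsub_zero, tsub_self]
    ring
  rw [schur3, hnum, hden, ← div_neg]
  rcases eq_or_ne x 0 with rfl | hx
  · simp
  · exact mul_div_mul_left _ _ (mul_ne_zero h2 hx)

end

theorem schur_spec_odd_odd_even_general {F : Type*} [Field F] (x y : F) (h2 : (2 : F) ≠ 0)
    (a b c : ℕ) (ha : Odd a) (hb : Odd b) (hc : Even c) :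
    schur3 ![a, b, c] ![x, -x, y] =
      - (schur2 ![(b - 1) / 2, c / 2] ![x ^ 2, y ^ 2] * (x ^ 2) ^ ((a + 1) / 2)) := by
  rw [schur3_self_neg_of_odd_odd_even x y h2 ha hb hc, schur2_eq]
  obtain ⟨A, rfl⟩ := ha
  obtain ⟨B, rfl⟩ := hb
  obtain ⟨C, rfl⟩ := hc
  have hA : (2 * A + 1 + 1) / 2 = A + 1 := by omega
  have hB : (2 * B + 1 - 1) / 2 = B := by omega
  have hC : (C + C) / 2 = C := by omega
  simp only [Matrix.cons_val_zero, Matrix.cons_val_one, hA, hB, hC]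
  ring

/-- for `a ≥ b ≥ c ≥ 0` with `a, b` odd and `c` even (empty 2-core),
`s_{(a,b,c)}(x,-x,y) = - s_{((b-1)/2, c/2)}(x²,y²) · s_{((a+1)/2)}(x²)`. -/
theorem schur_spec_odd_odd_even {F : Type*} [Field F] (x y : F) (h2 : (2 : F) ≠ 0)
    (hx : x ≠ 0) (hxy : x ≠ y) (hxy' : x ≠ -y)
    (a b c : ℕ) (hab : b ≤ a) (hbc : c ≤ b)
    (ha : Odd a) (hb : Odd b) (hc : Even c) :
    schur3 ![a, b, c] ![x, -x, y] =
      - (schur2 ![(b - 1) / 2, c / 2] ![x ^ 2, y ^ 2] * (x ^ 2) ^ ((a + 1) / 2)) :=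
  schur_spec_odd_odd_even_general x y h2 a b c ha hb hc
end
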